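/- The optimal value function is Lipschitz in the task: for any tasks w, w' ∈ ℝ^d, ‖Q*_w − Q*_{w'}‖_∞ ≤ (‖φ‖_∞/(1−γ)) ‖w − w'‖. -/

import Mathlib

open scoped RealInnerProductSpace

noncomputable section

variable {S A E : Type*}

/-- Expected value at step `n` of the (vector-valued) one-step function `f` along
trajectories that start with the state-action pair `(s, a)` and afterwards follow the
deterministic policy `π` in an MDP with transition kernel `p`. -/
def stepVal [Fintype S] [AddCommMonoid E] [Module ℝ E]
    (p : S → A → S → ℝ) (π : S → A) (f : S → A → S → E) : ℕ → S → A → E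
  | 0, s, a => ∑ s' : S, p s a s' • f s a s'
  | n + 1, s, a => ∑ s' : S, p s a s' • stepVal p π f n s' (π s')

/-- Expected discounted sum of the one-step quantities `f` when following policy `π`
after starting with the pair `(s, a)`. -/
def polVal [Fintype S] [NormedAddCommGroup E] [NormedSpace ℝ E]
    (p : S → A → S → ℝ) (γ : ℝ) (π : S → A) (f : S → A → S → E) (s : S) (a : A) : E :=
  ∑' n : ℕ, γ ^ n • stepVal p π f n s a

/-- Action-value function `Q^π` of policy `π` for the one-step reward `r`. -/
def Qpol [Fintype S] (p : S → A → S → ℝ) (γ : ℝ) (π : S → A)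
    (r : S → A → S → ℝ) (s : S) (a : A) : ℝ :=
  polVal p γ π r s a

/-- Successor features of policy `π`: the expected discounted sum of feature vectors. -/
def SF [Fintype S] {d : ℕ} (p : S → A → S → ℝ) (γ : ℝ) (π : S → A)
    (φ : S → A → S → EuclideanSpace ℝ (Fin d)) (s : S) (a : A) :
    EuclideanSpace ℝ (Fin d) :=
  polVal p γ π φ s a

/-- `p` is a probability transition kernel. -/
def IsKernel [Fintype S] (p : S → A → S → ℝ) : Prop :=
  (∀ s a s', 0 ≤ p s a s') ∧ ∀ s a, ∑ s' : S, p s a s' = 1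

/-- Optimal action-value function, over deterministic stationary policies. -/
def Qstar [Fintype S] (p : S → A → S → ℝ) (γ : ℝ) (r : S → A → S → ℝ)
    (s : S) (a : A) : ℝ :=
  ⨆ π : S → A, Qpol p γ π r s a

/-- Reward linear in the features `φ` with task (weight) vector `w`. -/
def rTask {d : ℕ} (φ : S → A → S → EuclideanSpace ℝ (Fin d))
    (w : EuclideanSpace ℝ (Fin d)) : S → A → S → ℝ :=
  fun s a s' => ⟪φ s a s', w⟫

end

/-! For a fixed policy `π`, `Q^π_w` is linear in the reward, so `Q^π_w - Q^π_{w'} = Q^π_{w - w'}`;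
the reward `⟪φ, w - w'⟫` is bounded by `‖φ‖_∞ ‖w - w'‖` and a discounted sum of expectations of
a reward bounded by `C` is bounded by `C / (1 - γ)`. Taking suprema over policies is
1-Lipschitz for the sup norm, so the same bound passes to `Q*`. -/

section PolicyEvaluation

variable {S A E : Type*} [Fintype S] {p : S → A → S → ℝ}

lemma stepVal_sub [AddCommGroup E] [Module ℝ E] (π : S → A) (f g : S → A → S → E) (n : ℕ)
    (s : S) (a : A) :
    stepVal p π (f - g) n s a = stepVal p π f n s a - stepVal p π g n s a := by
  induction n generalizing s a with
  | zero => simp only [stepVal, Pi.sub_apply, smul_sub, Finset.sum_sub_distrib]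
  | succ n ih => simp only [stepVal, ih, smul_sub, Finset.sum_sub_distrib]

variable [NormedAddCommGroup E] [NormedSpace ℝ E]

lemma IsKernel.norm_sum_smul_le (hp : IsKernel p) {x : S → E} {C : ℝ} (hx : ∀ s', ‖x s'‖ ≤ C)
    (s : S) (a : A) : ‖∑ s', p s a s' • x s'‖ ≤ C := by
  simpa using (convex_closedBall (0 : E) C).sum_mem (fun s' _ => hp.1 s a s') (hp.2 s a)
    (fun s' _ => mem_closedBall_zero_iff.2 (hx s'))

lemma norm_stepVal_le (hp : IsKernel p) {f : S → A → S → E} {C : ℝ}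
    (hf : ∀ s a s', ‖f s a s'‖ ≤ C) (π : S → A) (n : ℕ) (s : S) (a : A) :
    ‖stepVal p π f n s a‖ ≤ C := by
  induction n generalizing s a with
  | zero => exact hp.norm_sum_smul_le (hf s a) s a
  | succ n ih => exact hp.norm_sum_smul_le (fun s' => ih s' (π s')) s a

variable {γ : ℝ}

lemma norm_discounted_stepVal_le (hp : IsKernel p) (hγ0 : 0 ≤ γ) {f : S → A → S → E} {C : ℝ}
    (hf : ∀ s a s', ‖f s a s'‖ ≤ C) (π : S → A) (s : S) (a : A) (n : ℕ) :
    ‖γ ^ n • stepVal p π f n s a‖ ≤ C * γ ^ n := by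
  rw [norm_smul, norm_pow, Real.norm_of_nonneg hγ0, mul_comm]
  exact mul_le_mul_of_nonneg_right (norm_stepVal_le hp hf π n s a) (pow_nonneg hγ0 n)

lemma hasSum_geometric_mul (hγ0 : 0 ≤ γ) (hγ1 : γ < 1) (C : ℝ) :
    HasSum (fun n : ℕ => C * γ ^ n) (C / (1 - γ)) := by
  simpa [div_eq_mul_inv] using (hasSum_geometric_of_lt_one hγ0 hγ1).mul_left C

lemma norm_polVal_le (hp : IsKernel p) (hγ0 : 0 ≤ γ) (hγ1 : γ < 1) {f : S → A → S → E} {C : ℝ}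
    (hf : ∀ s a s', ‖f s a s'‖ ≤ C) (π : S → A) (s : S) (a : A) :
    ‖polVal p γ π f s a‖ ≤ C / (1 - γ) :=
  tsum_of_norm_bounded (hasSum_geometric_mul hγ0 hγ1 C) (norm_discounted_stepVal_le hp hγ0 hf π s a)

lemma summable_discounted_stepVal [CompleteSpace E] (hp : IsKernel p) (hγ0 : 0 ≤ γ) (hγ1 : γ < 1)
    {f : S → A → S → E} {C : ℝ} (hf : ∀ s a s', ‖f s a s'‖ ≤ C) (π : S → A) (s : S) (a : A) :
    Summable fun n : ℕ => γ ^ n • stepVal p π f n s a :=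
  .of_norm_bounded (hasSum_geometric_mul hγ0 hγ1 C).summable
    (norm_discounted_stepVal_le hp hγ0 hf π s a)

lemma polVal_sub [CompleteSpace E] (hp : IsKernel p) (hγ0 : 0 ≤ γ) (hγ1 : γ < 1)
    {f g : S → A → S → E} {C D : ℝ} (hf : ∀ s a s', ‖f s a s'‖ ≤ C)
    (hg : ∀ s a s', ‖g s a s'‖ ≤ D) (π : S → A) (s : S) (a : A) :
    polVal p γ π (f - g) s a = polVal p γ π f s a - polVal p γ π g s a := by
  simp only [polVal, stepVal_sub, smul_sub]
  exact (summable_discounted_stepVal hp hγ0 hγ1 hf π s a).tsum_sub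
    (summable_discounted_stepVal hp hγ0 hγ1 hg π s a)

end PolicyEvaluation

lemma abs_ciSup_sub_ciSup_le {ι : Type*} [Nonempty ι] [Finite ι] {f g : ι → ℝ} {C : ℝ}
    (h : ∀ i, |f i - g i| ≤ C) : |(⨆ i, f i) - ⨆ i, g i| ≤ C := by
  rw [abs_sub_le_iff, sub_le_iff_le_add, sub_le_iff_le_add]
  constructor <;> refine ciSup_le fun i => ?_
  · have := le_ciSup (Finite.bddAbove_range g) i
    linarith [(abs_le.1 (h i)).2]
  · have := le_ciSup (Finite.bddAbove_range f) i
    linarith [(abs_le.1 (h i)).1]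

lemma le_iSup_iSup_iSup_of_finite {α β δ : Type*} [Finite α] [Finite β] [Finite δ]
    (f : α → β → δ → ℝ) (x : α) (y : β) (z : δ) : f x y z ≤ ⨆ x, ⨆ y, ⨆ z, f x y z :=
  le_ciSup_of_le (Finite.bddAbove_range _) x <| le_ciSup_of_le (Finite.bddAbove_range _) y <|
    le_ciSup (Finite.bddAbove_range _) z

section LinearTask

variable {S A : Type*} {d : ℕ} (φ : S → A → S → EuclideanSpace ℝ (Fin d))

lemma rTask_sub (w w' : EuclideanSpace ℝ (Fin d)) : rTask φ w - rTask φ w' = rTask φ (w - w') := by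
  funext s a s'
  simp only [rTask, Pi.sub_apply, inner_sub_right]

lemma norm_rTask_le [Finite S] [Finite A] (v : EuclideanSpace ℝ (Fin d)) (s : S) (a : A) (s' : S) :
    ‖rTask φ v s a s'‖ ≤ (⨆ s, ⨆ a, ⨆ s', ‖φ s a s'‖) * ‖v‖ :=
  (norm_inner_le_norm _ _).trans <| mul_le_mul_of_nonneg_right
    (le_iSup_iSup_iSup_of_finite (fun s a s' => ‖φ s a s'‖) s a s') (norm_nonneg v)

end LinearTask

theorem statement9_general {S A : Type*} [Fintype S] [Fintype A]
    {d : ℕ} (p : S → A → S → ℝ) (hp : IsKernel p)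
    (γ : ℝ) (hγ0 : 0 ≤ γ) (hγ1 : γ < 1)
    (φ : S → A → S → EuclideanSpace ℝ (Fin d))
    (w w' : EuclideanSpace ℝ (Fin d)) :
    (⨆ s, ⨆ a, |Qstar p γ (rTask φ w) s a - Qstar p γ (rTask φ w') s a|) ≤
      (⨆ s, ⨆ a, ⨆ s', ‖φ s a s'‖) / (1 - γ) * ‖w - w'‖ := by
  have hbound : 0 ≤ (⨆ s, ⨆ a, ⨆ s', ‖φ s a s'‖) / (1 - γ) * ‖w - w'‖ := by
    have := Real.iSup_nonneg fun s => Real.iSup_nonneg fun a =>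
      Real.iSup_nonneg fun s' => norm_nonneg (φ s a s')
    have : 0 < 1 - γ := by linarith
    positivity
  have hQ : ∀ s a, |Qstar p γ (rTask φ w) s a - Qstar p γ (rTask φ w') s a| ≤
      (⨆ s, ⨆ a, ⨆ s', ‖φ s a s'‖) / (1 - γ) * ‖w - w'‖ := by
    intro s a
    have : Nonempty A := ⟨a⟩
    refine abs_ciSup_sub_ciSup_le fun π => ?_
    rw [Qpol, Qpol, ← Real.norm_eq_abs, ← polVal_sub hp hγ0 hγ1 (norm_rTask_le φ w)
      (norm_rTask_le φ w'), rTask_sub]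
    exact (norm_polVal_le hp hγ0 hγ1 (norm_rTask_le φ (w - w')) π s a).trans_eq (by ring)
  exact Real.iSup_le (fun s => Real.iSup_le (hQ s) hbound) hbound

/-- the optimal value function is Lipschitz in the task:
`‖Q*_w − Q*_{w'}‖_∞ ≤ (‖φ‖_∞/(1−γ)) ‖w − w'‖`. -/
theorem statement9 {S A : Type*} [Fintype S] [Fintype A] [Nonempty S] [Nonempty A]
    {d : ℕ} (p : S → A → S → ℝ) (hp : IsKernel p)
    (γ : ℝ) (hγ0 : 0 ≤ γ) (hγ1 : γ < 1)
    (φ : S → A → S → EuclideanSpace ℝ (Fin d))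
    (w w' : EuclideanSpace ℝ (Fin d)) :
    (⨆ s, ⨆ a, |Qstar p γ (rTask φ w) s a - Qstar p γ (rTask φ w') s a|) ≤
      (⨆ s, ⨆ a, ⨆ s', ‖φ s a s'‖) / (1 - γ) * ‖w - w'‖ :=
  statement9_general p hp γ hγ0 hγ1 φ w w'
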